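/- arXiv:2110.01543 — 2 statements merged into one kernel-verified Lean document; each statement's English description precedes it below -/
import Mathlib

section
/- In the stochastic SAM step framework, let C > 0 be a constant and suppose the parameters satisfy β_k > 0, δ_k ≥ Cβ_k⁻², and 0 ≤ α_k ≤ min{1, β_k^{1/2}}. Then almost surely: (i) E[‖H_k r_k‖₂² | 𝓕_k] ≤ 2β_k²(1 + C⁻¹)(‖∇f(x_k)‖₂² + σ²/n), and (ii) ∇f(x_k)ᵀ E[H_k r_k | 𝓕_k] ≤ −(1/2)β_k μ ‖∇f(x_k)‖₂² + β_k² μ⁻¹ (1 + C⁻¹) σ²/n. -/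
set_option maxHeartbeats 1000000
open Matrix MeasureTheory Filter

noncomputable def norm2 {n : ℕ} (v : Fin n → ℝ) : ℝ := Real.sqrt (∑ i, v i ^ 2)

lemma norm2_eq_norm {n : ℕ} (v : Fin n → ℝ) :
    norm2 v = ‖(WithLp.equiv 2 (Fin n → ℝ)).symm v‖ := by
  rw [EuclideanSpace.norm_eq]
  simp [norm2, Real.norm_eq_abs, sq_abs]

lemma norm2_nonneg {n : ℕ} (v : Fin n → ℝ) : 0 ≤ norm2 v := Real.sqrt_nonneg _

lemma norm2_sq {n : ℕ} (v : Fin n → ℝ) : norm2 v ^ 2 = ∑ i, v i ^ 2 := by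
  rw [norm2, Real.sq_sqrt]
  exact Finset.sum_nonneg fun i _ => sq_nonneg _

lemma norm2_neg {n : ℕ} (v : Fin n → ℝ) : norm2 (-v) = norm2 v := by
  simp [norm2]

lemma dot_eq_inner {n : ℕ} (u v : Fin n → ℝ) :
    u ⬝ᵥ v = inner ℝ ((WithLp.equiv 2 (Fin n → ℝ)).symm u) ((WithLp.equiv 2 (Fin n → ℝ)).symm v) := by
  simp [dotProduct, PiLp.inner_apply, RCLike.inner_apply, mul_comm]

lemma abs_dot_le {n : ℕ} (u v : Fin n → ℝ) : |u ⬝ᵥ v| ≤ norm2 u * norm2 v := by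
  rw [dot_eq_inner, norm2_eq_norm, norm2_eq_norm]
  exact abs_real_inner_le_norm _ _

lemma norm2_sub_le {n : ℕ} (u v : Fin n → ℝ) : norm2 (u - v) ≤ norm2 u + norm2 v := by
  simp only [norm2_eq_norm]
  exact norm_sub_le _ _

lemma abs_apply_le_norm2 {n : ℕ} (v : Fin n → ℝ) (i : Fin n) : |v i| ≤ norm2 v := by
  rw [← Real.sqrt_sq_eq_abs, norm2]
  refine Real.sqrt_le_sqrt ?_
  exact Finset.single_le_sum (f := fun j => v j ^ 2) (fun j _ => sq_nonneg _) (Finset.mem_univ i)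

lemma norm2_continuous {n : ℕ} : Continuous (norm2 (n := n)) := by
  unfold norm2
  exact Real.continuous_sqrt.comp (continuous_finset_sum _ fun i _ => (continuous_apply i).pow 2)

lemma condexp_proj_ae {Ω : Type} {m0 : MeasurableSpace Ω} (μ : Measure Ω) [IsFiniteMeasure μ]
    {F : MeasurableSpace Ω} (hF : F ≤ m0) {d : ℕ} (φ : Ω → Fin d → ℝ) (hφ : Integrable φ μ)
    (i : Fin d) :
    (fun ω => (μ[φ | F]) ω i) =ᵐ[μ] μ[(fun ω => φ ω i) | F] := by
  letI : MeasurableSpace Ω := m0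
  have h1 : Integrable (fun ω => φ ω i) μ :=
    (ContinuousLinearMap.proj (R := ℝ) (φ := fun _ : Fin d => ℝ) i).integrable_comp hφ
  have hce : Integrable (μ[φ|F]) μ := integrable_condExp
  refine ae_eq_condExp_of_forall_setIntegral_eq hF h1 (fun s _ _ => ?_) (fun s hs _ => ?_) ?_
  · exact ((ContinuousLinearMap.proj (R := ℝ) (φ := fun _ : Fin d => ℝ) i).integrable_comp
      hce).integrableOn
  · have h2 := ContinuousLinearMap.integral_comp_comm
      (ContinuousLinearMap.proj (R := ℝ) (φ := fun _ : Fin d => ℝ) i) (hce.integrableOn (s := s))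
    have h3 := ContinuousLinearMap.integral_comp_comm
      (ContinuousLinearMap.proj (R := ℝ) (φ := fun _ : Fin d => ℝ) i) (hφ.integrableOn (s := s))
    simp only [ContinuousLinearMap.proj_apply] at h2 h3
    rw [h2, h3, setIntegral_condExp hF hφ hs]
  · exact ((continuous_apply i).comp_stronglyMeasurable
      (stronglyMeasurable_condExp (f := φ) (m := F) (μ := μ))).aestronglyMeasurable

lemma integrable_proj {Ω : Type} {m : MeasurableSpace Ω} {μ : Measure Ω} {d : ℕ}
    {φ : Ω → Fin d → ℝ} (hφ : Integrable φ μ) (i : Fin d) :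
    Integrable (fun ω => φ ω i) μ :=
  (ContinuousLinearMap.proj (R := ℝ) (φ := fun _ : Fin d => ℝ) i).integrable_comp hφ

/-- **Corollary 1**: in the stochastic SAM step framework, if `β_k > 0`, `δ_k ≥ Cβ_k⁻²` and
`0 ≤ α_k ≤ min{1, β_k^{1/2}}` (with `C > 0`), then almost surely
(i) `E[‖H_k r_k‖₂² | 𝓕_k] ≤ 2β_k²(1 + C⁻¹)(‖∇f(x_k)‖₂² + σ²/n)`, and
(ii) `∇f(x_k)ᵀ E[H_k r_k | 𝓕_k] ≤ −(1/2)β_k μ ‖∇f(x_k)‖₂² + β_k² μ⁻¹ (1 + C⁻¹) σ²/n`. -/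
theorem sam_corollary_bounds
    {Ω : Type} (F : MeasurableSpace Ω) [m0 : MeasurableSpace Ω] (μ : Measure Ω) [IsProbabilityMeasure μ]
    (hF : F ≤ m0)
    (d n : ℕ) (hd : 1 ≤ d) (hn : 1 ≤ n)
    (σ muc : ℝ) (hσ : 0 < σ) (hmuc : muc ∈ Set.Ioo (0 : ℝ) 1)
    (f : (Fin d → ℝ) → ℝ) (hf : ContDiff ℝ 1 f)
    (gradf : (Fin d → ℝ) → (Fin d → ℝ))
    (hgrad : ∀ x v, fderiv ℝ f x v = gradf x ⬝ᵥ v)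
    (xk : Ω → (Fin d → ℝ)) (hxk : Measurable[F] xk)
    (gk : Ω → (Fin d → ℝ)) (hgk_meas : Measurable gk)
    (hgk_int : Integrable gk μ)
    (hgk_mean : μ[gk | F] =ᵐ[μ] fun ω => gradf (xk ω))
    (hgk_var_int : Integrable (fun ω => norm2 (gk ω - gradf (xk ω)) ^ 2) μ)
    (hgk_var : μ[(fun ω => norm2 (gk ω - gradf (xk ω)) ^ 2) | F] ≤ᵐ[μ] fun _ => σ ^ 2 / n)
    (C αk βk δk : ℝ) (hC : 0 < C) (hβk : 0 < βk) (hδk : C / βk ^ 2 ≤ δk)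
    (hαk : 0 ≤ αk ∧ αk ≤ min 1 (Real.sqrt βk))
    (H : Ω → Matrix (Fin d) (Fin d) ℝ) (hH_meas : ∀ i j, Measurable fun ω => H ω i j)
    (hP1 : ∀ᵐ ω ∂μ, ∀ p : Fin d → ℝ, βk * muc * norm2 p ^ 2 ≤ p ⬝ᵥ (H ω).mulVec p)
    (hP2 : ∀ᵐ ω ∂μ, ∀ v : Fin d → ℝ,
      norm2 ((H ω).mulVec v) ^ 2
        ≤ 2 * (βk ^ 2 * (1 + 2 * αk ^ 2 - 2 * αk) + αk ^ 2 * δk⁻¹) * norm2 v ^ 2)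
    (hP3 : ∀ᵐ ω ∂μ, ∀ v : Fin d → ℝ,
      norm2 ((βk • (1 : Matrix (Fin d) (Fin d) ℝ) - H ω).mulVec v)
        ≤ αk * ((Real.sqrt δk)⁻¹ + βk) * norm2 v)
    (hHr_int : Integrable (fun ω => norm2 ((H ω).mulVec (-(gk ω))) ^ 2) μ)
    (hHr_int' : Integrable (fun ω => (H ω).mulVec (-(gk ω))) μ) :
    (μ[(fun ω => norm2 ((H ω).mulVec (-(gk ω))) ^ 2) | F] ≤ᵐ[μ]
      fun ω => 2 * βk ^ 2 * (1 + C⁻¹) * (norm2 (gradf (xk ω)) ^ 2 + σ ^ 2 / n)) ∧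
    ((fun ω => gradf (xk ω) ⬝ᵥ ((μ[(fun ω' => (H ω').mulVec (-(gk ω'))) | F]) ω)) ≤ᵐ[μ]
      fun ω => -(1 / 2) * βk * muc * norm2 (gradf (xk ω)) ^ 2
        + βk ^ 2 * muc⁻¹ * (1 + C⁻¹) * (σ ^ 2 / n)) := by
  obtain ⟨hα0, hα1'⟩ := hαk
  have hα1 : αk ≤ 1 := hα1'.trans (min_le_left _ _)
  have hαβ : αk ≤ Real.sqrt βk := hα1'.trans (min_le_right _ _)
  have hα2β : αk ^ 2 ≤ βk := by
    have h := Real.sq_sqrt hβk.le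
    nlinarith [Real.sqrt_nonneg βk]
  have hmuc0 : (0 : ℝ) < muc := hmuc.1
  have hδ0 : (0 : ℝ) < δk := lt_of_lt_of_le (by positivity) hδk
  have hδinv : δk⁻¹ ≤ βk ^ 2 * C⁻¹ := by
    have h1 : (βk ^ 2 / C)⁻¹ ≤ δk := by
      rw [inv_div]; exact hδk
    have := inv_le_of_inv_le₀ (by positivity : (0:ℝ) < βk ^ 2 / C) h1
    calc δk⁻¹ ≤ βk ^ 2 / C := this
      _ = βk ^ 2 * C⁻¹ := div_eq_mul_inv _ _
  -- gradient continuity and measurability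
  have hgradf_eq : gradf = fun x i => fderiv ℝ f x (Pi.single i 1) := by
    funext x i
    rw [hgrad x (Pi.single i 1), dotProduct_single, mul_one]
  have hgradf_cont : Continuous gradf := by
    rw [hgradf_eq]
    exact continuous_pi fun i =>
      (hf.continuous_fderiv_apply one_ne_zero).comp (continuous_id.prodMk continuous_const)
  have hG_smF : StronglyMeasurable[F] (fun ω => gradf (xk ω)) :=
    (hgradf_cont.measurable.comp hxk).stronglyMeasurable
  have he_smF : StronglyMeasurable (fun ω => gk ω - gradf (xk ω)) :=
    hgk_meas.stronglyMeasurable.sub (hG_smF.mono hF)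
  have hHr_smF : StronglyMeasurable (fun ω => (H ω).mulVec (-(gk ω))) := by
    refine Measurable.stronglyMeasurable ?_
    apply measurable_pi_lambda
    intro i
    simp only [Matrix.mulVec, dotProduct, Pi.neg_apply]
    exact Finset.measurable_sum _ fun j _ =>
      (hH_meas i j).mul ((measurable_pi_apply j).comp hgk_meas).neg
  have hgk_smF : StronglyMeasurable gk := hgk_meas.stronglyMeasurable
  -- integrability facts
  have hG_int : Integrable (fun ω => gradf (xk ω)) μ := by
    have h1 : Integrable (μ[gk|F]) μ := integrable_condExp
    exact h1.congr hgk_mean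
  have he_int : Integrable (fun ω => gk ω - gradf (xk ω)) μ := hgk_int.sub hG_int
  have hb : (0:ℝ) < βk * muc := mul_pos hβk hmuc0
  have hgsq_ptwise : ∀ᵐ ω ∂μ, ‖norm2 (gk ω) ^ 2‖
      ≤ (βk*muc)⁻¹^2 * norm2 ((H ω).mulVec (-(gk ω))) ^ 2 := by
    filter_upwards [hP1] with ω h1
    have h2 := h1 (gk ω)
    have h3 : gk ω ⬝ᵥ (H ω).mulVec (gk ω)
        ≤ norm2 (gk ω) * norm2 ((H ω).mulVec (-(gk ω))) := by
      rw [Matrix.mulVec_neg, norm2_neg]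
      exact (le_abs_self _).trans (abs_dot_le _ _)
    have h4 := h2.trans h3
    have ha := norm2_nonneg (gk ω)
    have hh := norm2_nonneg ((H ω).mulVec (-(gk ω)))
    rw [Real.norm_eq_abs, abs_of_nonneg (sq_nonneg _)]
    rcases eq_or_lt_of_le ha with ha0 | ha0
    · rw [← ha0]
      norm_num
      positivity
    · have h5 : βk * muc * norm2 (gk ω) ≤ norm2 ((H ω).mulVec (-(gk ω))) := by
        nlinarith
      have h6 : (βk*muc)^2 * norm2 (gk ω)^2 ≤ norm2 ((H ω).mulVec (-(gk ω)))^2 := by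
        nlinarith
      have h7 : (βk*muc)⁻¹^2 * ((βk*muc)^2 * norm2 (gk ω)^2) = norm2 (gk ω)^2 := by
        field_simp
      calc norm2 (gk ω)^2 = (βk*muc)⁻¹^2 * ((βk*muc)^2 * norm2 (gk ω)^2) := h7.symm
        _ ≤ (βk*muc)⁻¹^2 * norm2 ((H ω).mulVec (-(gk ω)))^2 := by
            have : (0:ℝ) ≤ (βk*muc)⁻¹^2 := by positivity
            nlinarith
  have hgsq_int : Integrable (fun ω => norm2 (gk ω) ^ 2) μ := by
    refine Integrable.mono' (hHr_int.const_mul ((βk*muc)⁻¹^2)) ?_ hgsq_ptwise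
    exact ((((continuous_pow 2).comp norm2_continuous).comp_stronglyMeasurable
      hgk_smF)).aestronglyMeasurable
  have hGsq_int : Integrable (fun ω => norm2 (gradf (xk ω)) ^ 2) μ := by
    refine Integrable.mono' ((hgsq_int.const_mul 2).add (hgk_var_int.const_mul 2)) ?_
      (Filter.Eventually.of_forall fun ω => ?_)
    · exact ((((continuous_pow 2).comp norm2_continuous).comp_stronglyMeasurable
        hG_smF).mono hF).aestronglyMeasurable
    · have h2 := norm2_sub_le (gk ω) (gk ω - gradf (xk ω))
      rw [sub_sub_cancel] at h2
      simp only [Pi.add_apply]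
      rw [Real.norm_eq_abs, abs_of_nonneg (sq_nonneg _)]
      nlinarith [h2, norm2_nonneg (gk ω), norm2_nonneg (gk ω - gradf (xk ω)),
        norm2_nonneg (gradf (xk ω)),
        sq_nonneg (norm2 (gk ω) - norm2 (gk ω - gradf (xk ω)))]
  -- generic integrability of dot products and componentwise products
  have hdot_sm : ∀ (u v : Ω → Fin d → ℝ), StronglyMeasurable u → StronglyMeasurable v →
      StronglyMeasurable (fun ω => u ω ⬝ᵥ v ω) := by
    intro u v hu hv
    refine Measurable.stronglyMeasurable ?_
    simp only [dotProduct]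
    exact Finset.measurable_sum _ fun i _ =>
      ((measurable_pi_apply i).comp hu.measurable).mul ((measurable_pi_apply i).comp hv.measurable)
  have hprod_int : ∀ (u v : Ω → Fin d → ℝ), StronglyMeasurable u → StronglyMeasurable v →
      Integrable (fun ω => norm2 (u ω)^2) μ → Integrable (fun ω => norm2 (v ω)^2) μ →
      Integrable (fun ω => u ω ⬝ᵥ v ω) μ := by
    intro u v hu hv hui hvi
    refine Integrable.mono' ((hui.const_mul (1/2)).add (hvi.const_mul (1/2)))
      (((hdot_sm u v hu hv)).aestronglyMeasurable)
      (Filter.Eventually.of_forall fun ω => ?_)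
    simp only [Pi.add_apply]
    rw [Real.norm_eq_abs]
    calc |u ω ⬝ᵥ v ω| ≤ norm2 (u ω) * norm2 (v ω) := abs_dot_le _ _
      _ ≤ 1/2 * norm2 (u ω)^2 + 1/2 * norm2 (v ω)^2 := by
          nlinarith [sq_nonneg (norm2 (u ω) - norm2 (v ω))]
  have hprod_int' : ∀ (u v : Ω → Fin d → ℝ), StronglyMeasurable u → StronglyMeasurable v →
      Integrable (fun ω => norm2 (u ω)^2) μ → Integrable (fun ω => norm2 (v ω)^2) μ →
      ∀ i : Fin d, Integrable (fun ω => u ω i * v ω i) μ := by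
    intro u v hu hv hui hvi i
    refine Integrable.mono' ((hui.const_mul (1/2)).add (hvi.const_mul (1/2)))
      ?_ (Filter.Eventually.of_forall fun ω => ?_)
    · exact ((((measurable_pi_apply i).comp hu.measurable).mul
        ((measurable_pi_apply i).comp hv.measurable)).stronglyMeasurable).aestronglyMeasurable
    · simp only [Pi.add_apply]
      rw [Real.norm_eq_abs, abs_mul]
      calc |u ω i| * |v ω i| ≤ norm2 (u ω) * norm2 (v ω) := by
            exact mul_le_mul (abs_apply_le_norm2 _ i) (abs_apply_le_norm2 _ i)
              (abs_nonneg _) (norm2_nonneg _)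
        _ ≤ 1/2 * norm2 (u ω)^2 + 1/2 * norm2 (v ω)^2 := by
            nlinarith [sq_nonneg (norm2 (u ω) - norm2 (v ω))]
  have hHrsq_int := hHr_int
  have hGe_int : Integrable (fun ω => gradf (xk ω) ⬝ᵥ (gk ω - gradf (xk ω))) μ :=
    hprod_int _ _ (hG_smF.mono hF) he_smF hGsq_int hgk_var_int
  have hGHr_int : Integrable (fun ω => gradf (xk ω) ⬝ᵥ (H ω).mulVec (-(gk ω))) μ :=
    hprod_int _ _ (hG_smF.mono hF) hHr_smF hGsq_int hHr_int
  have hGiei_int : ∀ i : Fin d,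
      Integrable (fun ω => gradf (xk ω) i * (gk ω - gradf (xk ω)) i) μ :=
    hprod_int' _ _ (hG_smF.mono hF) he_smF hGsq_int hgk_var_int
  have hGiHri_int : ∀ i : Fin d,
      Integrable (fun ω => gradf (xk ω) i * (H ω).mulVec (-(gk ω)) i) μ :=
    hprod_int' _ _ (hG_smF.mono hF) hHr_smF hGsq_int hHr_int
  have hei_int : ∀ i : Fin d, Integrable (fun ω => (gk ω - gradf (xk ω)) i) μ :=
    fun i => integrable_proj he_int i
  have hHri_int : ∀ i : Fin d, Integrable (fun ω => (H ω).mulVec (-(gk ω)) i) μ :=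
    fun i => integrable_proj hHr_int' i
  have hGi_int : ∀ i : Fin d, Integrable (fun ω => gradf (xk ω) i) μ :=
    fun i => integrable_proj hG_int i
  have hgi_int : ∀ i : Fin d, Integrable (fun ω => gk ω i) μ :=
    fun i => integrable_proj hgk_int i
  -- conditional expectation of the error components vanishes
  have hei_zero : ∀ i : Fin d, μ[(fun ω => (gk ω - gradf (xk ω)) i)|F] =ᵐ[μ] 0 := by
    intro i
    have h1 : μ[(fun ω => (gk ω - gradf (xk ω)) i)|F]
        =ᵐ[μ] μ[(fun ω => gk ω i)|F] - μ[(fun ω => gradf (xk ω) i)|F] := by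
      have heq : (fun ω => (gk ω - gradf (xk ω)) i)
          = (fun ω => gk ω i) - (fun ω => gradf (xk ω) i) := rfl
      rw [heq]
      exact condExp_sub (hgi_int i) (hGi_int i) F
    have h2 : μ[(fun ω => gk ω i)|F] =ᵐ[μ] (fun ω => gradf (xk ω) i) := by
      refine (condexp_proj_ae μ hF gk hgk_int i).symm.trans ?_
      exact hgk_mean.mono fun ω h => congrFun h i
    have h4 : μ[(fun ω => gradf (xk ω) i)|F] = (fun ω => gradf (xk ω) i) :=
      condExp_of_stronglyMeasurable hF
        ((continuous_apply i).comp_stronglyMeasurable hG_smF) (hGi_int i)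
    filter_upwards [h1, h2] with ω e1 e2
    rw [e1, Pi.zero_apply, Pi.sub_apply, e2, h4]
    ring
  have hcross_zero : μ[(fun ω => gradf (xk ω) ⬝ᵥ (gk ω - gradf (xk ω)))|F] =ᵐ[μ] 0 := by
    have hsum : (fun ω => gradf (xk ω) ⬝ᵥ (gk ω - gradf (xk ω)))
        = ∑ i : Fin d, (fun ω => gradf (xk ω) i * (gk ω - gradf (xk ω)) i) := by
      funext ω
      simp [dotProduct, Finset.sum_apply]
    rw [hsum]
    refine (condExp_finset_sum (fun i _ => hGiei_int i) F).trans ?_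
    have h2 : ∀ i : Fin d,
        μ[(fun ω => gradf (xk ω) i * (gk ω - gradf (xk ω)) i)|F] =ᵐ[μ] 0 := by
      intro i
      have h3 : (fun ω => gradf (xk ω) i * (gk ω - gradf (xk ω)) i)
          = (fun ω => gradf (xk ω) i) * (fun ω => (gk ω - gradf (xk ω)) i) := rfl
      have h5 := condExp_mul_of_stronglyMeasurable_left
        ((continuous_apply i).comp_stronglyMeasurable hG_smF)
        (h3 ▸ hGiei_int i) (hei_int i)
      refine (h3 ▸ h5).trans ?_
      filter_upwards [hei_zero i] with ω h
      have h' : (μ[(fun ω' => (gk ω' - gradf (xk ω')) i)|F]) ω = 0 := by simpa using h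
      simp only [Pi.mul_apply, Pi.zero_apply]
      rw [h', mul_zero]
    have h4 : ∀ᵐ ω ∂μ, ∀ i : Fin d,
        (μ[(fun ω' => gradf (xk ω') i * (gk ω' - gradf (xk ω')) i)|F]) ω = 0 :=
      ae_all_iff.2 fun i => (h2 i).mono fun ω h => by simpa using h
    filter_upwards [h4] with ω h
    rw [Finset.sum_apply, Pi.zero_apply]
    exact Finset.sum_eq_zero fun i _ => h i
  -- Part (i)
  have hK'nn : (0:ℝ) ≤ 2 * βk ^ 2 * (1 + C⁻¹) := by positivity
  have hKle : 2 * (βk ^ 2 * (1 + 2 * αk ^ 2 - 2 * αk) + αk ^ 2 * δk⁻¹)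
      ≤ 2 * βk ^ 2 * (1 + C⁻¹) := by
    have hδnn : (0:ℝ) ≤ δk⁻¹ := by positivity
    have hα2le1 : αk ^ 2 ≤ 1 := by nlinarith
    have h1 : αk ^ 2 * δk⁻¹ ≤ βk ^ 2 * C⁻¹ := le_trans (by nlinarith) hδinv
    have h2 : βk ^ 2 * (2 * αk ^ 2 - 2 * αk) ≤ 0 :=
      mul_nonpos_of_nonneg_of_nonpos (sq_nonneg βk) (by nlinarith)
    nlinarith
  have hpt1 : ∀ᵐ ω ∂μ, norm2 ((H ω).mulVec (-(gk ω))) ^ 2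
      ≤ 2 * βk ^ 2 * (1 + C⁻¹) * norm2 (gk ω) ^ 2 := by
    filter_upwards [hP2] with ω h2
    have h3 := h2 (-(gk ω))
    rw [norm2_neg] at h3
    exact h3.trans (mul_le_mul_of_nonneg_right hKle (sq_nonneg _))
  have hmono1 := condExp_mono (m := F) hHr_int (hgsq_int.const_mul (2 * βk ^ 2 * (1 + C⁻¹))) hpt1
  have hsmul1 : μ[(fun ω => 2 * βk ^ 2 * (1 + C⁻¹) * norm2 (gk ω) ^ 2)|F]
      =ᵐ[μ] fun ω => 2 * βk ^ 2 * (1 + C⁻¹) * (μ[(fun ω' => norm2 (gk ω') ^ 2)|F]) ω :=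
    condExp_smul (μ := μ) (m := F) (2 * βk ^ 2 * (1 + C⁻¹)) (fun ω => norm2 (gk ω) ^ 2)
  have hGsq_ce : μ[(fun ω => norm2 (gradf (xk ω)) ^ 2)|F]
      = fun ω => norm2 (gradf (xk ω)) ^ 2 :=
    condExp_of_stronglyMeasurable hF
      (((continuous_pow 2).comp norm2_continuous).comp_stronglyMeasurable hG_smF) hGsq_int
  have hdecomp : (fun ω => norm2 (gk ω) ^ 2)
      = ((fun ω => norm2 (gradf (xk ω)) ^ 2)
        + (fun ω => 2 * (gradf (xk ω) ⬝ᵥ (gk ω - gradf (xk ω)))))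
        + (fun ω => norm2 (gk ω - gradf (xk ω)) ^ 2) := by
    funext ω
    simp only [Pi.add_apply, norm2_sq, dotProduct, Pi.sub_apply]
    rw [Finset.mul_sum, ← Finset.sum_add_distrib, ← Finset.sum_add_distrib]
    exact Finset.sum_congr rfl fun i _ => by ring
  have hA : μ[(fun ω => norm2 (gk ω) ^ 2)|F]
      ≤ᵐ[μ] fun ω => norm2 (gradf (xk ω)) ^ 2 + σ ^ 2 / n := by
    have e1 : μ[(fun ω => norm2 (gk ω) ^ 2)|F]
        =ᵐ[μ] μ[((fun ω => norm2 (gradf (xk ω)) ^ 2)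
          + (fun ω => 2 * (gradf (xk ω) ⬝ᵥ (gk ω - gradf (xk ω)))))|F]
          + μ[(fun ω => norm2 (gk ω - gradf (xk ω)) ^ 2)|F] := by
      rw [hdecomp]
      exact condExp_add (hGsq_int.add (hGe_int.const_mul 2)) hgk_var_int F
    have e2 : μ[((fun ω => norm2 (gradf (xk ω)) ^ 2)
          + (fun ω => 2 * (gradf (xk ω) ⬝ᵥ (gk ω - gradf (xk ω)))))|F]
        =ᵐ[μ] μ[(fun ω => norm2 (gradf (xk ω)) ^ 2)|F]
          + μ[(fun ω => 2 * (gradf (xk ω) ⬝ᵥ (gk ω - gradf (xk ω))))|F] :=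
      condExp_add hGsq_int (hGe_int.const_mul 2) F
    have e3 : μ[(fun ω => 2 * (gradf (xk ω) ⬝ᵥ (gk ω - gradf (xk ω))))|F] =ᵐ[μ] 0 := by
      have := condExp_smul (μ := μ) (m := F) (2:ℝ)
        (fun ω => gradf (xk ω) ⬝ᵥ (gk ω - gradf (xk ω)))
      refine this.trans ?_
      filter_upwards [hcross_zero] with ω h
      simp only [Pi.smul_apply, smul_eq_mul, Pi.zero_apply]
      rw [h]
      simp
    filter_upwards [e1, e2, e3, hgk_var] with ω a1 a2 a3 a4
    rw [a1, Pi.add_apply, a2, Pi.add_apply, hGsq_ce, a3]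
    simp only [Pi.zero_apply]
    have := a4
    linarith
  constructor
  · filter_upwards [hmono1, hsmul1, hA] with ω h1 h2 h3
    calc (μ[(fun ω' => norm2 ((H ω').mulVec (-(gk ω'))) ^ 2)|F]) ω
        ≤ (μ[(fun ω' => 2 * βk ^ 2 * (1 + C⁻¹) * norm2 (gk ω') ^ 2)|F]) ω := h1
      _ = 2 * βk ^ 2 * (1 + C⁻¹) * (μ[(fun ω' => norm2 (gk ω') ^ 2)|F]) ω := h2
      _ ≤ 2 * βk ^ 2 * (1 + C⁻¹) * (norm2 (gradf (xk ω)) ^ 2 + σ ^ 2 / n) :=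
          mul_le_mul_of_nonneg_left h3 hK'nn
  · -- Part (ii)
    have hsδ : ((Real.sqrt δk)⁻¹)^2 = δk⁻¹ := by
      rw [← Real.sqrt_inv, Real.sq_sqrt (by positivity)]
    have hrhsD : 2 * (βk*muc) * (βk^2*muc⁻¹*(1+C⁻¹)) = 2*βk^3*(1+C⁻¹) := by
      field_simp
    have hs0 : (0:ℝ) ≤ (Real.sqrt δk)⁻¹ := by positivity
    have ht2 : (αk*((Real.sqrt δk)⁻¹+βk))^2 ≤ 2*(βk*muc)*(βk^2*muc⁻¹*(1+C⁻¹)) := by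
      rw [hrhsD]
      have h1 : αk^2 * ((Real.sqrt δk)⁻¹)^2 ≤ βk * (βk^2*C⁻¹) := by
        rw [hsδ]
        calc αk^2 * δk⁻¹ ≤ βk * δk⁻¹ :=
              mul_le_mul_of_nonneg_right hα2β (by positivity)
          _ ≤ βk * (βk^2*C⁻¹) := mul_le_mul_of_nonneg_left hδinv hβk.le
      have h2 : αk^2 * βk^2 ≤ βk * βk^2 := mul_le_mul_of_nonneg_right hα2β (sq_nonneg βk)
      have h3 : αk^2*(2*(Real.sqrt δk)⁻¹*βk) ≤ αk^2*(((Real.sqrt δk)⁻¹)^2+βk^2) :=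
        mul_le_mul_of_nonneg_left (by nlinarith [sq_nonneg ((Real.sqrt δk)⁻¹ - βk)])
          (sq_nonneg αk)
      nlinarith [h1, h2, h3]
    have hyoung : ∀ a c : ℝ, 0 ≤ a → 0 ≤ c →
        a * (αk*((Real.sqrt δk)⁻¹+βk) * c)
          ≤ βk*muc/2 * a^2 + βk^2*muc⁻¹*(1+C⁻¹) * c^2 := by
      intro a c ha hc
      nlinarith [sq_nonneg (βk*muc*a - αk*((Real.sqrt δk)⁻¹+βk)*c),
        mul_nonneg (sub_nonneg.2 ht2) (sq_nonneg c), hb, sq_nonneg c, sq_nonneg a]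
    have hpt2 : ∀ᵐ ω ∂μ, gradf (xk ω) ⬝ᵥ (H ω).mulVec (-(gk ω))
        ≤ -(βk*muc/2) * norm2 (gradf (xk ω))^2
          + (-βk) * (gradf (xk ω) ⬝ᵥ (gk ω - gradf (xk ω)))
          + βk^2*muc⁻¹*(1+C⁻¹) * norm2 (gk ω - gradf (xk ω))^2 := by
      filter_upwards [hP1, hP3] with ω h1 h3
      have hsplit : (H ω).mulVec (-(gk ω))
          = -((H ω).mulVec (gradf (xk ω))) + -((H ω).mulVec (gk ω - gradf (xk ω))) := by
        calc (H ω).mulVec (-(gk ω))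
            = (H ω).mulVec (-(gradf (xk ω) + (gk ω - gradf (xk ω)))) := by
              rw [add_sub_cancel]
          _ = -((H ω).mulVec (gradf (xk ω))) + -((H ω).mulVec (gk ω - gradf (xk ω))) := by
              rw [Matrix.mulVec_neg, Matrix.mulVec_add, neg_add]
      have hdot : gradf (xk ω) ⬝ᵥ (H ω).mulVec (-(gk ω))
          = -(gradf (xk ω) ⬝ᵥ (H ω).mulVec (gradf (xk ω)))
            + -(gradf (xk ω) ⬝ᵥ (H ω).mulVec (gk ω - gradf (xk ω))) := by
        rw [hsplit, dotProduct_add, dotProduct_neg, dotProduct_neg]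
      have hterm1 : -(gradf (xk ω) ⬝ᵥ (H ω).mulVec (gradf (xk ω)))
          ≤ -(βk*muc) * norm2 (gradf (xk ω))^2 := by
        have := h1 (gradf (xk ω))
        linarith
      have hHe : (H ω).mulVec (gk ω - gradf (xk ω))
          = βk • (gk ω - gradf (xk ω))
            - (βk • (1 : Matrix (Fin d) (Fin d) ℝ) - H ω).mulVec (gk ω - gradf (xk ω)) := by
        rw [Matrix.sub_mulVec, Matrix.smul_mulVec, Matrix.one_mulVec, sub_sub_cancel]
      have hterm2 : -(gradf (xk ω) ⬝ᵥ (H ω).mulVec (gk ω - gradf (xk ω)))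
          ≤ -βk * (gradf (xk ω) ⬝ᵥ (gk ω - gradf (xk ω)))
            + (βk*muc/2) * norm2 (gradf (xk ω))^2
            + βk^2*muc⁻¹*(1+C⁻¹) * norm2 (gk ω - gradf (xk ω))^2 := by
        rw [hHe, dotProduct_sub, dotProduct_smul]
        have hw : gradf (xk ω) ⬝ᵥ (βk • (1 : Matrix (Fin d) (Fin d) ℝ) - H ω).mulVec
              (gk ω - gradf (xk ω))
            ≤ norm2 (gradf (xk ω)) * (αk*((Real.sqrt δk)⁻¹+βk)
              * norm2 (gk ω - gradf (xk ω))) := by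
          calc gradf (xk ω) ⬝ᵥ (βk • (1 : Matrix (Fin d) (Fin d) ℝ) - H ω).mulVec
                (gk ω - gradf (xk ω))
              ≤ |gradf (xk ω) ⬝ᵥ (βk • (1 : Matrix (Fin d) (Fin d) ℝ) - H ω).mulVec
                (gk ω - gradf (xk ω))| := le_abs_self _
            _ ≤ norm2 (gradf (xk ω)) * norm2 ((βk • (1 : Matrix (Fin d) (Fin d) ℝ) - H ω).mulVec
                (gk ω - gradf (xk ω))) := abs_dot_le _ _
            _ ≤ norm2 (gradf (xk ω)) * (αk*((Real.sqrt δk)⁻¹+βk)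
                * norm2 (gk ω - gradf (xk ω))) :=
                mul_le_mul_of_nonneg_left (h3 _) (norm2_nonneg _)
        have hy := hyoung (norm2 (gradf (xk ω))) (norm2 (gk ω - gradf (xk ω)))
          (norm2_nonneg _) (norm2_nonneg _)
        have hw2 := hw.trans (by linarith [hy] : norm2 (gradf (xk ω))
            * (αk*((Real.sqrt δk)⁻¹+βk) * norm2 (gk ω - gradf (xk ω)))
          ≤ βk*muc/2 * norm2 (gradf (xk ω))^2
            + βk^2*muc⁻¹*(1+C⁻¹) * norm2 (gk ω - gradf (xk ω))^2)
        simp only [smul_eq_mul]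
        linarith
      rw [hdot]
      linarith
    have hD0 : (0:ℝ) ≤ βk^2*muc⁻¹*(1+C⁻¹) := by positivity
    have hrhs_int : Integrable (fun ω => -(βk*muc/2) * norm2 (gradf (xk ω))^2
        + (-βk) * (gradf (xk ω) ⬝ᵥ (gk ω - gradf (xk ω)))
        + βk^2*muc⁻¹*(1+C⁻¹) * norm2 (gk ω - gradf (xk ω))^2) μ :=
      ((hGsq_int.const_mul _).add (hGe_int.const_mul _)).add (hgk_var_int.const_mul _)
    have hmono2 := condExp_mono (m := F) hGHr_int hrhs_int hpt2
    have hceq1 : μ[(fun ω => -(βk*muc/2) * norm2 (gradf (xk ω))^2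
          + (-βk) * (gradf (xk ω) ⬝ᵥ (gk ω - gradf (xk ω)))
          + βk^2*muc⁻¹*(1+C⁻¹) * norm2 (gk ω - gradf (xk ω))^2)|F]
        =ᵐ[μ] μ[((fun ω => -(βk*muc/2) * norm2 (gradf (xk ω))^2)
            + (fun ω => (-βk) * (gradf (xk ω) ⬝ᵥ (gk ω - gradf (xk ω)))))|F]
          + μ[(fun ω => βk^2*muc⁻¹*(1+C⁻¹) * norm2 (gk ω - gradf (xk ω))^2)|F] :=
      condExp_add ((hGsq_int.const_mul _).add (hGe_int.const_mul _))
        (hgk_var_int.const_mul _) F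
    have hceq2 : μ[((fun ω => -(βk*muc/2) * norm2 (gradf (xk ω))^2)
          + (fun ω => (-βk) * (gradf (xk ω) ⬝ᵥ (gk ω - gradf (xk ω)))))|F]
        =ᵐ[μ] μ[(fun ω => -(βk*muc/2) * norm2 (gradf (xk ω))^2)|F]
          + μ[(fun ω => (-βk) * (gradf (xk ω) ⬝ᵥ (gk ω - gradf (xk ω))))|F] :=
      condExp_add (hGsq_int.const_mul _) (hGe_int.const_mul _) F
    have hsm1 : μ[(fun ω => -(βk*muc/2) * norm2 (gradf (xk ω))^2)|F]
        = fun ω => -(βk*muc/2) * norm2 (gradf (xk ω))^2 :=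
      condExp_of_stronglyMeasurable hF
        ((((continuous_pow 2).comp norm2_continuous).comp_stronglyMeasurable
          hG_smF).const_mul _) (hGsq_int.const_mul _)
    have hsm2 : μ[(fun ω => (-βk) * (gradf (xk ω) ⬝ᵥ (gk ω - gradf (xk ω))))|F] =ᵐ[μ] 0 := by
      refine (condExp_smul (μ := μ) (m := F) (-βk)
        (fun ω => gradf (xk ω) ⬝ᵥ (gk ω - gradf (xk ω)))).trans ?_
      filter_upwards [hcross_zero] with ω h
      simp only [Pi.smul_apply, smul_eq_mul, Pi.zero_apply]
      rw [h]
      simp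
    have hsm3 : μ[(fun ω => βk^2*muc⁻¹*(1+C⁻¹) * norm2 (gk ω - gradf (xk ω))^2)|F]
        =ᵐ[μ] fun ω => βk^2*muc⁻¹*(1+C⁻¹) * (μ[(fun ω' => norm2 (gk ω' - gradf (xk ω'))^2)|F]) ω :=
      condExp_smul (μ := μ) (m := F) (βk^2*muc⁻¹*(1+C⁻¹))
        (fun ω => norm2 (gk ω - gradf (xk ω))^2)
    -- move the conditional expectation inside the dot product
    have hdotsum : (fun ω => gradf (xk ω) ⬝ᵥ (H ω).mulVec (-(gk ω)))
        = ∑ i : Fin d, (fun ω => gradf (xk ω) i * (H ω).mulVec (-(gk ω)) i) := by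
      funext ω
      simp [dotProduct, Finset.sum_apply]
    have hcomp : ∀ i : Fin d,
        (fun ω => gradf (xk ω) i * (μ[(fun ω' => (H ω').mulVec (-(gk ω')))|F]) ω i)
        =ᵐ[μ] μ[(fun ω => gradf (xk ω) i * (H ω).mulVec (-(gk ω)) i)|F] := by
      intro i
      have h1 := condexp_proj_ae μ hF (fun ω => (H ω).mulVec (-(gk ω))) hHr_int' i
      have h3 : (fun ω => gradf (xk ω) i * (H ω).mulVec (-(gk ω)) i)
          = (fun ω => gradf (xk ω) i) * (fun ω => (H ω).mulVec (-(gk ω)) i) := rfl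
      have h2 := condExp_mul_of_stronglyMeasurable_left
        ((continuous_apply i).comp_stronglyMeasurable hG_smF)
        (h3 ▸ hGiHri_int i) (hHri_int i)
      refine EventuallyEq.trans ?_ (h3 ▸ h2).symm
      filter_upwards [h1] with ω e1
      simp only [Pi.mul_apply]
      rw [← e1]
    have hsum2 := condExp_finset_sum (μ := μ) (m := F)
      (f := fun i => fun ω => gradf (xk ω) i * (H ω).mulVec (-(gk ω)) i)
      (fun i (_ : i ∈ Finset.univ) => hGiHri_int i)
    have hswap : (fun ω => gradf (xk ω) ⬝ᵥ (μ[(fun ω' => (H ω').mulVec (-(gk ω')))|F]) ω)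
        =ᵐ[μ] μ[(fun ω => gradf (xk ω) ⬝ᵥ (H ω).mulVec (-(gk ω)))|F] := by
      have hall : ∀ᵐ ω ∂μ, ∀ i : Fin d,
          gradf (xk ω) i * (μ[(fun ω' => (H ω').mulVec (-(gk ω')))|F]) ω i
          = (μ[(fun ω' => gradf (xk ω') i * (H ω').mulVec (-(gk ω')) i)|F]) ω :=
        ae_all_iff.2 fun i => hcomp i
      filter_upwards [hall, hsum2] with ω h e
      calc gradf (xk ω) ⬝ᵥ (μ[(fun ω' => (H ω').mulVec (-(gk ω')))|F]) ω
          = ∑ i, gradf (xk ω) i * (μ[(fun ω' => (H ω').mulVec (-(gk ω')))|F]) ω i := rfl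
        _ = ∑ i, (μ[(fun ω' => gradf (xk ω') i * (H ω').mulVec (-(gk ω')) i)|F]) ω :=
            Finset.sum_congr rfl fun i _ => h i
        _ = (∑ i : Fin d, μ[(fun ω' => gradf (xk ω') i * (H ω').mulVec (-(gk ω')) i)|F]) ω :=
            (Finset.sum_apply _ _ _).symm
        _ = (μ[(∑ i : Fin d, fun ω' => gradf (xk ω') i * (H ω').mulVec (-(gk ω')) i)|F]) ω :=
            e.symm
        _ = (μ[(fun ω' => gradf (xk ω') ⬝ᵥ (H ω').mulVec (-(gk ω')))|F]) ω := by
            rw [← hdotsum]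
    filter_upwards [hswap, hmono2, hceq1, hceq2, hsm2, hsm3, hgk_var] with ω a1 a2 a3 a4 a5 a6 a7
    have hvar : (μ[(fun ω' => norm2 (gk ω' - gradf (xk ω')) ^ 2)|F]) ω ≤ σ^2/n := a7
    calc gradf (xk ω) ⬝ᵥ (μ[(fun ω' => (H ω').mulVec (-(gk ω')))|F]) ω
        = (μ[(fun ω' => gradf (xk ω') ⬝ᵥ (H ω').mulVec (-(gk ω')))|F]) ω := a1
      _ ≤ (μ[(fun ω' => -(βk*muc/2) * norm2 (gradf (xk ω'))^2
          + (-βk) * (gradf (xk ω') ⬝ᵥ (gk ω' - gradf (xk ω')))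
          + βk^2*muc⁻¹*(1+C⁻¹) * norm2 (gk ω' - gradf (xk ω'))^2)|F]) ω := a2
      _ = -(βk*muc/2) * norm2 (gradf (xk ω))^2 + 0
          + βk^2*muc⁻¹*(1+C⁻¹) * (μ[(fun ω' => norm2 (gk ω' - gradf (xk ω')) ^ 2)|F]) ω := by
          rw [a3, Pi.add_apply, a4, Pi.add_apply, hsm1, a5, a6]
          simp only [Pi.zero_apply]
      _ ≤ -(βk*muc/2) * norm2 (gradf (xk ω))^2 + 0 + βk^2*muc⁻¹*(1+C⁻¹) * (σ^2/n) := by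
          have := mul_le_mul_of_nonneg_left hvar hD0
          linarith
      _ = -(1 / 2) * βk * muc * norm2 (gradf (xk ω)) ^ 2
          + βk ^ 2 * muc⁻¹ * (1 + C⁻¹) * (σ ^ 2 / n) := by ring
end

section
/- In the linear Anderson mixing setup, let k ≥ 1 and suppose rank(R_k) = k. Then the span of the columns of X_k equals the k-th Krylov subspace generated by A and the initial residual: span{Δx_0, …, Δx_{k−1}} = 𝒦_k(A, r(x₀)). -/
open Matrix

/-- The residual `r(x) = b − Ax`. -/
def resid {d : ℕ} (A : Matrix (Fin d) (Fin d) ℝ) (b : Fin d → ℝ) (x : Fin d → ℝ) :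
    Fin d → ℝ := b - A.mulVec x

/-- The matrix whose columns are the first `j` forward differences of the sequence `v`. -/
def diffMat {d : ℕ} (v : ℕ → Fin d → ℝ) (j : ℕ) : Matrix (Fin d) (Fin j) ℝ :=
  Matrix.of fun i (l : Fin j) => v ((l : ℕ) + 1) i - v (l : ℕ) i

/-- The `k`-th Krylov subspace `𝒦_k(A, v) = span{v, Av, …, A^{k−1}v}`. -/
def krylov {d : ℕ} (A : Matrix (Fin d) (Fin d) ℝ) (v : Fin d → ℝ) (k : ℕ) :
    Submodule ℝ (Fin d → ℝ) :=
  Submodule.span ℝ {w | ∃ i < k, w = (A ^ i).mulVec v}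

section Krylov

variable {d : ℕ} (A : Matrix (Fin d) (Fin d) ℝ) (v : Fin d → ℝ)

lemma krylov_mono {k m : ℕ} (h : k ≤ m) : krylov A v k ≤ krylov A v m :=
  Submodule.span_mono fun _ ⟨i, hi, hw⟩ => ⟨i, hi.trans_le h, hw⟩

lemma pow_mulVec_mem_krylov {i k : ℕ} (h : i < k) : (A ^ i) *ᵥ v ∈ krylov A v k :=
  Submodule.subset_span ⟨i, h, rfl⟩

lemma self_mem_krylov {k : ℕ} (h : 0 < k) : v ∈ krylov A v k := by
  simpa using pow_mulVec_mem_krylov A v h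

variable {A v} in
lemma mulVec_mem_krylov_succ {w : Fin d → ℝ} {k : ℕ} (h : w ∈ krylov A v k) :
    A *ᵥ w ∈ krylov A v (k + 1) := by
  induction h using Submodule.span_induction with
  | mem w hw =>
    obtain ⟨i, hi, rfl⟩ := hw
    rw [mulVec_mulVec, ← pow_succ']
    exact pow_mulVec_mem_krylov A v (Nat.succ_lt_succ hi)
  | zero => simp
  | add _ _ _ _ ha hb => rw [mulVec_add]; exact add_mem ha hb
  | smul c _ _ ha => rw [mulVec_smul]; exact Submodule.smul_mem _ c ha

lemma krylov_eq_span_range (k : ℕ) :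
    krylov A v k = Submodule.span ℝ (Set.range fun i : Fin k => (A ^ (i : ℕ)) *ᵥ v) := by
  unfold krylov
  congr 1
  ext w
  exact ⟨fun ⟨i, hi, hw⟩ => ⟨⟨i, hi⟩, hw.symm⟩, fun ⟨i, hw⟩ => ⟨i, i.isLt, hw.symm⟩⟩

lemma finrank_krylov_le (k : ℕ) : Module.finrank ℝ (krylov A v k) ≤ k := by
  rw [krylov_eq_span_range]
  simpa [Set.finrank] using finrank_range_le_card (R := ℝ) fun i : Fin k => (A ^ (i : ℕ)) *ᵥ v

end Krylov

section Differences

variable {d : ℕ} (x : ℕ → Fin d → ℝ)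

lemma diffMat_mulVec {j : ℕ} (G : Fin j → ℝ) :
    diffMat x j *ᵥ G = ∑ l : Fin j, G l • (x ((l : ℕ) + 1) - x l) := by
  funext i
  simp only [mulVec, dotProduct, diffMat, of_apply, Finset.sum_apply, Pi.smul_apply,
    Pi.sub_apply, smul_eq_mul, mul_comm]

variable {x}

lemma diffMat_mulVec_mem {S : Submodule ℝ (Fin d → ℝ)} {j : ℕ}
    (h : ∀ m < j, x (m + 1) - x m ∈ S) (G : Fin j → ℝ) : diffMat x j *ᵥ G ∈ S := by
  rw [diffMat_mulVec]
  exact Submodule.sum_mem _ fun l _ => Submodule.smul_mem _ _ (h l l.isLt)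

lemma sub_initial_mem_of_forall_diff_mem {S : Submodule ℝ (Fin d → ℝ)} {j : ℕ}
    (h : ∀ m < j, x (m + 1) - x m ∈ S) : x j - x 0 ∈ S := by
  rw [← Finset.sum_range_sub x]
  exact Submodule.sum_mem _ fun m hm => h m (Finset.mem_range.mp hm)

variable (A : Matrix (Fin d) (Fin d) ℝ) (b : Fin d → ℝ)

lemma diffMat_resid (j : ℕ) : diffMat (fun i => resid A b (x i)) j = -(A * diffMat x j) := by
  ext i m
  simp only [diffMat, resid, of_apply, Pi.sub_apply, Matrix.neg_apply, Matrix.mul_apply, mulVec,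
    dotProduct, mul_sub, Finset.sum_sub_distrib]
  ring

lemma resid_eq_resid_sub_mulVec (y z : Fin d → ℝ) :
    resid A b y = resid A b z - A *ᵥ (y - z) := by
  simp only [resid, mulVec_sub]
  abel

lemma rank_diffMat_resid_le (j : ℕ) :
    (diffMat (fun i => resid A b (x i)) j).rank ≤ (diffMat x j).rank := by
  simpa [diffMat_resid] using rank_mul_le_right (-A) (diffMat x j)

end Differences

variable {d : ℕ} {A : Matrix (Fin d) (Fin d) ℝ} {b : Fin d → ℝ} {x : ℕ → Fin d → ℝ}
  {Γ : (j : ℕ) → Fin j → ℝ}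

lemma anderson_step_sub_eq {j : ℕ}
    (hstep : x (j + 1) = x j + resid A b (x j)
      - (diffMat x j + diffMat (fun i => resid A b (x i)) j) *ᵥ Γ j) :
    x (j + 1) - x j = resid A b (x j) - diffMat x j *ᵥ Γ j + A *ᵥ (diffMat x j *ᵥ Γ j) := by
  rw [hstep, add_mulVec, diffMat_resid, neg_mulVec, mulVec_mulVec]
  abel

lemma anderson_diff_mem_krylov (hx1 : x 1 = x 0 + resid A b (x 0))
    (hrec : ∀ j : ℕ, 1 ≤ j →
      x (j + 1) = x j + resid A b (x j)
        - (diffMat x j + diffMat (fun i => resid A b (x i)) j) *ᵥ Γ j)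
    (j : ℕ) : x (j + 1) - x j ∈ krylov A (resid A b (x 0)) (j + 1) := by
  induction j using Nat.strong_induction_on with
  | _ j ih =>
    set K := krylov A (resid A b (x 0))
    rcases Nat.eq_zero_or_pos j with rfl | hj
    · rw [hx1, add_sub_cancel_left]
      exact self_mem_krylov _ _ Nat.one_pos
    have hprev : ∀ m < j, x (m + 1) - x m ∈ K j := fun m hm =>
      krylov_mono _ _ hm (ih m hm)
    have hX : diffMat x j *ᵥ Γ j ∈ K j := diffMat_mulVec_mem hprev _
    have hr : resid A b (x j) ∈ K (j + 1) := by
      rw [resid_eq_resid_sub_mulVec A b (x j) (x 0)]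
      exact sub_mem (self_mem_krylov _ _ j.succ_pos)
        (mulVec_mem_krylov_succ (sub_initial_mem_of_forall_diff_mem hprev))
    rw [anderson_step_sub_eq (hrec j hj)]
    exact add_mem (sub_mem hr (krylov_mono _ _ j.le_succ hX)) (mulVec_mem_krylov_succ hX)

theorem anderson_mixing_span_eq_krylov_general (d : ℕ)
    (A : Matrix (Fin d) (Fin d) ℝ)
    (b x0 : Fin d → ℝ)
    (x : ℕ → Fin d → ℝ) (Γ : (j : ℕ) → Fin j → ℝ)
    (hx0 : x 0 = x0)
    (hx1 : x 1 = x 0 + resid A b (x 0))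
    (hrec : ∀ j : ℕ, 1 ≤ j →
      x (j + 1) = x j + resid A b (x j)
        - (diffMat x j + diffMat (fun i => resid A b (x i)) j).mulVec (Γ j))
    (k : ℕ)
    (hrank : (diffMat (fun i => resid A b (x i)) k).rank = k) :
    Submodule.span ℝ (Set.range fun l : Fin k => fun i => x ((l : ℕ) + 1) i - x (l : ℕ) i)
      = krylov A (resid A b x0) k := by
  subst hx0
  change Submodule.span ℝ (Set.range (diffMat x k).col) = _
  refine Submodule.eq_of_le_of_finrank_le ?_ ?_
  · exact Submodule.span_le.mpr <| Set.range_subset_iff.mpr fun l =>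
      krylov_mono _ _ l.isLt (anderson_diff_mem_krylov hx1 hrec l)
  · have hrankX : (diffMat x k).rank = k :=
      le_antisymm (rank_le_width _) (hrank.ge.trans (rank_diffMat_resid_le A b k))
    rw [← rank_eq_finrank_span_cols, hrankX]
    exact finrank_krylov_le _ _ k

/-- Key inductive claim in the proof of Proposition 1: if `rank R_k = k`, the span of the
columns of `X_k` equals the `k`-th Krylov subspace `𝒦_k(A, r(x₀))`. -/
theorem anderson_mixing_span_eq_krylov (d : ℕ) (hd : 1 ≤ d)
    (A : Matrix (Fin d) (Fin d) ℝ) (hA : A.PosDef)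
    (b x0 : Fin d → ℝ)
    (x : ℕ → Fin d → ℝ) (Γ : (j : ℕ) → Fin j → ℝ)
    (hx0 : x 0 = x0)
    (hx1 : x 1 = x 0 + resid A b (x 0))
    (hΓ : ∀ j : ℕ, ∀ G : Fin j → ℝ,
      norm2 (resid A b (x j) - (diffMat (fun i => resid A b (x i)) j).mulVec (Γ j)) ≤
        norm2 (resid A b (x j) - (diffMat (fun i => resid A b (x i)) j).mulVec G))
    (hrec : ∀ j : ℕ, 1 ≤ j →
      x (j + 1) = x j + resid A b (x j)
        - (diffMat x j + diffMat (fun i => resid A b (x i)) j).mulVec (Γ j))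
    (k : ℕ) (hk : 1 ≤ k)
    (hrank : (diffMat (fun i => resid A b (x i)) k).rank = k) :
    Submodule.span ℝ (Set.range fun l : Fin k => fun i => x ((l : ℕ) + 1) i - x (l : ℕ) i)
      = krylov A (resid A b x0) k :=
  anderson_mixing_span_eq_krylov_general d A b x0 x Γ hx0 hx1 hrec k hrank
end
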